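/- Let n ≥ 1, α ∈ (0,2), and β ∈ (0,n). There exists a constant C > 0 depending only on n, α, β such that for every (x,t) ∈ ℝ^{n+1}_+, ∫_{ℝ^n} p^α_t(y) |y−x|^{β−n} dy ≤ C (t² + |x|²)^{(β−n)/2}. -/

import Mathlib

open MeasureTheory ENNReal Set Filter

noncomputable section

abbrev En (n : ℕ) := EuclideanSpace ℝ (Fin n)

/-- The open upper half-space `ℝⁿ × (0,∞)`. -/
def upperHalf (n : ℕ) : Set (En n × ℝ) := {z | 0 < z.2}

/-- Poisson-type kernel `p^α_t(x) = c(n,α) t^α (|x|²+t²)^{-(n+α)/2}`. -/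
def poissonKernelPT (n : ℕ) (α t : ℝ) (x : En n) : ℝ :=
  (Real.Gamma (((n : ℝ) + α) / 2) / (Real.pi ^ ((n : ℝ) / 2) * Real.Gamma (α / 2))) *
    t ^ α / (‖x‖ ^ 2 + t ^ 2) ^ (((n : ℝ) + α) / 2)

/-- Caffarelli–Silvestre extension `P_α f(x,t) = ∫ p^α_t(x-y) f(y) dy`. -/
def csExt (n : ℕ) (α : ℝ) (f : En n → ℝ) (x : En n) (t : ℝ) : ℝ :=
  ∫ y, poissonKernelPT n α t (x - y) * f y

/-- The `L^p`-capacity `C^{α,p}(E)` associated with the Caffarelli–Silvestre extension. -/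
def capacity (n : ℕ) (α p : ℝ) (E : Set (En n × ℝ)) : ℝ :=
  sInf {c : ℝ | ∃ f : En n → ℝ, (∀ y, 0 ≤ f y) ∧ MemLp f (ENNReal.ofReal p) volume ∧
    (∀ z ∈ E, 1 ≤ csExt n α f z.1 z.2) ∧
    c = (eLpNorm f (ENNReal.ofReal p) volume).toReal ^ p}

/-- `c_{α,p}(μ;λ)`: infimum of capacities of compact sets of `μ`-measure at least `λ`. -/
def capMin (n : ℕ) (α p : ℝ) (μ : Measure (En n × ℝ)) (lam : ℝ) : ℝ≥0∞ :=
  ⨅ (K : Set (En n × ℝ)) (_ : IsCompact K ∧ K ⊆ upperHalf n ∧ ENNReal.ofReal lam ≤ μ K),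
    ENNReal.ofReal (capacity n α p K)

/-- The "parabolic" ball `B_r(x₀,t₀)`. -/
def pBall (n : ℕ) (x₀ : En n) (t₀ r : ℝ) : Set (En n × ℝ) :=
  {z | dist z.1 x₀ < r / 2 ∧ r < z.2 - t₀ ∧ z.2 - t₀ < 2 * r}

/-- Adjoint operator `P*_α μ(x) = ∫ p^α_t(x-z) dμ(z,t)`. -/
def dualPot (n : ℕ) (α : ℝ) (μ : Measure (En n × ℝ)) (x : En n) : ℝ≥0∞ :=
  ∫⁻ z, ENNReal.ofReal (poissonKernelPT n α z.2 (x - z.1)) ∂μ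

/-- Parabolic maximal function `Mμ(x) = sup_{r>0} r^{-n} μ(B_r(x,r))`. -/
def pMax (n : ℕ) (μ : Measure (En n × ℝ)) (x : En n) : ℝ≥0∞ :=
  ⨆ (r : ℝ) (_ : 0 < r), μ (pBall n x r r) / ENNReal.ofReal (r ^ (n : ℝ))

/-- Hedberg–Wolff potential `H_p μ(x,t) = ∫₀^∞ (r^{-n} μ(B_r(x,t)))^{p'-1} dr/r`, `p' = p/(p-1)`. -/
def wolff (n : ℕ) (p : ℝ) (μ : Measure (En n × ℝ)) (x : En n) (t : ℝ) : ℝ≥0∞ :=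
  ∫⁻ r in Set.Ioi (0 : ℝ),
    (μ (pBall n x t r) / ENNReal.ofReal (r ^ (n : ℝ))) ^ (p / (p - 1) - 1) / ENNReal.ofReal r

/-- Forward difference `Δ¹_h f(x) = f(x+h) - f(x)`. -/
def fwDiff (n : ℕ) (h : En n) (f : En n → ℝ) : En n → ℝ := fun x => f (x + h) - f x

/-- Iterated difference `Δ^k_h f`. -/
def iterDiff (n : ℕ) (k : ℕ) (h : En n) (f : En n → ℝ) : En n → ℝ := (fwDiff n h)^[k] f

/-- Fractional Laplacian `(-Δ)^{β/2} f`, via the Fourier transform. -/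
def fracLap (n : ℕ) (β : ℝ) (f : En n → ℝ) : En n → ℂ :=
  FourierTransformInv.fourierInv
    (fun ξ => (((2 * Real.pi * ‖ξ‖) ^ β : ℝ) : ℂ) * FourierTransform.fourier (fun x => (f x : ℂ)) ξ)

/-- Homogeneous Sobolev norm `‖f‖_{Ẇ^{β,p}(ℝⁿ)}`. -/
def sobolevNorm (n : ℕ) (β p : ℝ) (f : En n → ℝ) : ℝ :=
  if p = 1 ∨ p = (n : ℝ) / β then
    (∫ h : En n, (∫ x : En n, |iterDiff n (1 + ⌊β⌋₊) h f x| ^ p) / ‖h‖ ^ ((n : ℝ) + p * β)) ^ (1 / p)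
  else
    (∫ x : En n, ‖fracLap n β f x‖ ^ p) ^ (1 / p)

/-- Fractional capacity `Cap^{β,p}(S)`. -/
def fracCap (n : ℕ) (β p : ℝ) (S : Set (En n)) : ℝ :=
  sInf {c : ℝ | ∃ f : En n → ℝ, ContDiff ℝ (⊤ : ℕ∞) f ∧ HasCompactSupport f ∧ (∀ x, 0 ≤ f x) ∧
    (∀ x ∈ S, 1 ≤ f x) ∧ c = sobolevNorm n β p f ^ p}

/-- Tent `T(O) = {(x,r) ∈ ℝ^{n+1}_+ : B(x,r) ⊆ O}` over an open set `O ⊆ ℝⁿ`. -/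
def tent (n : ℕ) (O : Set (En n)) : Set (En n × ℝ) :=
  {z | 0 < z.2 ∧ Metric.ball z.1 z.2 ⊆ O}

/-- `c^β_p(μ;t)`: the `(p,β)`-fractional capacity minimizing function. -/
def fracCapMin (n : ℕ) (β p : ℝ) (μ : Measure (En n × ℝ)) (t : ℝ) : ℝ≥0∞ :=
  ⨅ (O : Set (En n)) (_ : IsOpen O ∧ Bornology.IsBounded O ∧ ENNReal.ofReal t < μ (tent n O)),
    ENNReal.ofReal (fracCap n β p O)

/-- Fractional perimeter `Per_β(E) = ∫_E ∫_{Eᶜ} |x-y|^{-n-β} dx dy`. -/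
def fracPer (n : ℕ) (β : ℝ) (E : Set (En n)) : ℝ≥0∞ :=
  ∫⁻ x in E, ∫⁻ y in Eᶜ, ENNReal.ofReal (‖x - y‖ ^ (-((n : ℝ) + β)))

/-! Both sides are homogeneous of degree `β - n` under `(x, t) ↦ (r x, r t)`, because
`p_{rt}(r y) = r^{-n} p_t(y)`; so it suffices to bound the integral on the sphere `t² + |x|² = 1`.
There we split `ℝⁿ` at the ball `B(x, 1/2)`. On the ball `|y|² + t² ≥ 1/4`, so the kernel is
bounded, and `|y - x|^{β-n}` is integrable near `x` since `β > 0`. Off the ball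
`|y - x|^{β-n} ≤ 2^{n-β}`, and the kernel has finite mass, independent of `t` by scaling. -/

section AddHaar

variable {E : Type*} [NormedAddCommGroup E] [MeasurableSpace E] [BorelSpace E] (μ : Measure E)

theorem setLIntegral_ball_norm_sub_rpow [μ.IsAddLeftInvariant] (x : E) (r s : ℝ) :
    ∫⁻ y in Metric.ball x r, ENNReal.ofReal (‖y - x‖ ^ s) ∂μ =
      ∫⁻ z in Metric.ball 0 r, ENNReal.ofReal (‖z‖ ^ s) ∂μ := by
  rw [← (measurePreserving_add_left μ x).setLIntegral_comp_preimage_emb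
    (measurableEmbedding_addLeft x)]
  simp [preimage_add_ball]

variable [NormedSpace ℝ E] [FiniteDimensional ℝ E] [μ.IsAddHaarMeasure]

theorem lintegral_comp_smul_of_pos (f : E → ℝ≥0∞) {r : ℝ} (hr : 0 < r) :
    ∫⁻ y, f (r • y) ∂μ = ENNReal.ofReal (r ^ Module.finrank ℝ E)⁻¹ * ∫⁻ y, f y ∂μ := by
  have := lintegral_map_equiv f (MeasurableEquiv.smul₀ r hr.ne') (μ := μ)
  rw [MeasurableEquiv.coe_smul₀, Measure.map_addHaar_smul μ hr.ne', lintegral_smul_measure] at this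
  rw [← this, abs_of_pos (by positivity), smul_eq_mul]

theorem setLIntegral_ball_norm_rpow_lt_top (hd : 1 ≤ Module.finrank ℝ E) (r : ℝ) {s : ℝ}
    (hs : -(Module.finrank ℝ E : ℝ) < s) :
    ∫⁻ z in Metric.ball 0 r, ENNReal.ofReal (‖z‖ ^ s) ∂μ < ∞ := by
  refine Integrable.lintegral_lt_top (integrableOn_ball_of_norm_le_rpow (C := 1) (α := -s) hd
    (by linarith) ?_ (measurable_norm.pow_const s).aestronglyMeasurable)
  refine Eventually.of_forall fun z => ?_
  rw [neg_neg, one_mul, Real.norm_of_nonneg (by positivity)]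

end AddHaar

/-- The constant `c(n,α)`. -/
def poissonConst (n : ℕ) (α : ℝ) : ℝ :=
  Real.Gamma (((n : ℝ) + α) / 2) / (Real.pi ^ ((n : ℝ) / 2) * Real.Gamma (α / 2))

section PoissonKernel

variable {n : ℕ} {α : ℝ}

theorem poissonKernelPT_eq (t : ℝ) (y : En n) :
    poissonKernelPT n α t y = poissonConst n α * t ^ α / (‖y‖ ^ 2 + t ^ 2) ^ (((n : ℝ) + α) / 2) :=
  rfl

theorem poissonConst_pos (hα : 0 < α) : 0 < poissonConst n α := by
  unfold poissonConst
  have : 0 < Real.Gamma (α / 2) := Real.Gamma_pos_of_pos (by positivity)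
  positivity

theorem poissonKernelPT_nonneg (hα : 0 < α) {t : ℝ} (ht : 0 ≤ t) (y : En n) :
    0 ≤ poissonKernelPT n α t y := by
  have := poissonConst_pos (n := n) hα
  rw [poissonKernelPT_eq]
  positivity

theorem poissonKernelPT_mul_smul {r t : ℝ} (hr : 0 < r) (ht : 0 ≤ t) (y : En n) :
    poissonKernelPT n α (r * t) (r • y) = (r ^ n)⁻¹ * poissonKernelPT n α t y := by
  have hscale : ((r ^ 2) : ℝ) ^ (((n : ℝ) + α) / 2) = r ^ n * r ^ α := by
    rw [← Real.rpow_natCast, ← Real.rpow_mul hr.le, ← Real.rpow_natCast, ← Real.rpow_add hr]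
    push_cast; ring_nf
  rw [poissonKernelPT_eq, poissonKernelPT_eq, norm_smul, Real.norm_of_nonneg hr.le,
    show (r * ‖y‖) ^ 2 + (r * t) ^ 2 = r ^ 2 * (‖y‖ ^ 2 + t ^ 2) by ring,
    Real.mul_rpow (x := r ^ 2) (by positivity) (by positivity), hscale, Real.mul_rpow hr.le ht]
  have : r ^ α ≠ 0 := (Real.rpow_pos_of_pos hr α).ne'
  field_simp

theorem poissonKernelPT_one (y : En n) :
    poissonKernelPT n α 1 y = poissonConst n α * (1 + ‖y‖ ^ 2) ^ (-((n : ℝ) + α) / 2) := by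
  rw [poissonKernelPT_eq, Real.one_rpow, one_pow, add_comm, neg_div, Real.rpow_neg (by positivity),
    div_eq_mul_inv, mul_one]

theorem lintegral_poissonKernelPT_one_lt_top (hα : 0 < α) :
    ∫⁻ y, ENNReal.ofReal (poissonKernelPT n α 1 y) < ∞ := by
  simp_rw [poissonKernelPT_one]
  refine Integrable.lintegral_lt_top (Integrable.const_mul ?_ _)
  exact integrable_rpow_neg_one_add_norm_sq (by rw [finrank_euclideanSpace_fin]; linarith)

theorem lintegral_poissonKernelPT_mul_rpow_smul (hα : 0 < α) {r t : ℝ} (hr : 0 < r) (ht : 0 ≤ t)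
    (x : En n) (s : ℝ) :
    ∫⁻ y, ENNReal.ofReal (poissonKernelPT n α (r * t) y * ‖y - r • x‖ ^ s) =
      ENNReal.ofReal (r ^ s) * ∫⁻ y, ENNReal.ofReal (poissonKernelPT n α t y * ‖y - x‖ ^ s) := by
  have hsubst := lintegral_comp_smul_of_pos volume
    (fun y => ENNReal.ofReal (poissonKernelPT n α (r * t) y * ‖y - r • x‖ ^ s)) hr
  have hinv : ENNReal.ofReal (r ^ n)⁻¹ ≠ 0 := by simp [hr]
  rw [finrank_euclideanSpace_fin] at hsubst
  rw [← ENNReal.mul_right_inj hinv ENNReal.ofReal_ne_top,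
    ← hsubst, ← lintegral_const_mul' _ _ ENNReal.ofReal_ne_top,
    ← lintegral_const_mul' _ _ ENNReal.ofReal_ne_top]
  congr 1 with y
  rw [poissonKernelPT_mul_smul hr ht, ← smul_sub, norm_smul, Real.norm_of_nonneg hr.le,
    Real.mul_rpow hr.le (norm_nonneg _)]
  have := poissonKernelPT_nonneg hα ht y
  rw [← ENNReal.ofReal_mul (by positivity), ← ENNReal.ofReal_mul (by positivity)]
  ring_nf

theorem lintegral_poissonKernelPT_eq_at_one (hα : 0 < α) {t : ℝ} (ht : 0 < t) :
    ∫⁻ y, ENNReal.ofReal (poissonKernelPT n α t y) =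
      ∫⁻ y, ENNReal.ofReal (poissonKernelPT n α 1 y) := by
  simpa using lintegral_poissonKernelPT_mul_rpow_smul (n := n) hα ht zero_le_one 0 0

theorem poissonKernelPT_le_of_mem_ball (hα : 0 < α) {t : ℝ} {x y : En n} (ht : 0 ≤ t)
    (hsphere : t ^ 2 + ‖x‖ ^ 2 = 1) (hy : y ∈ Metric.ball x (1 / 2)) :
    poissonKernelPT n α t y ≤ poissonConst n α * 4 ^ (((n : ℝ) + α) / 2) := by
  have hyx : ‖y - x‖ < 1 / 2 := by rwa [Metric.mem_ball, dist_eq_norm] at hy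
  have htri := norm_sub_norm_le x y
  rw [norm_sub_rev] at htri
  have hnorm_sq : 1 / 4 ≤ ‖y‖ ^ 2 + t ^ 2 := by
    nlinarith [norm_nonneg y, norm_nonneg x, sq_nonneg (2 * ‖y‖ + 1 - 2 * ‖x‖)]
  have ht1 : t ^ α ≤ 1 := Real.rpow_le_one ht (by nlinarith [norm_nonneg x]) hα.le
  have hc := poissonConst_pos (n := n) hα
  calc poissonKernelPT n α t y
      ≤ poissonConst n α * 1 / (1 / 4) ^ (((n : ℝ) + α) / 2) := by
        rw [poissonKernelPT_eq]; gcongr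
    _ = poissonConst n α * 4 ^ (((n : ℝ) + α) / 2) := by
        rw [one_div, Real.inv_rpow (by norm_num), div_inv_eq_mul, mul_one]

end PoissonKernel

theorem exists_lintegral_poissonKernelPT_mul_rpow_le_of_sphere {n : ℕ} (hn : 1 ≤ n) {α s : ℝ}
    (hα : 0 < α) (hs : -(n : ℝ) < s) (hs0 : s ≤ 0) :
    ∃ C : ℝ, 0 < C ∧ ∀ (x : En n) (t : ℝ), 0 < t → t ^ 2 + ‖x‖ ^ 2 = 1 →
      ∫⁻ y, ENNReal.ofReal (poissonKernelPT n α t y * ‖y - x‖ ^ s) ≤ ENNReal.ofReal C := by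
  set a := poissonConst n α * 4 ^ (((n : ℝ) + α) / 2)
  set J := ∫⁻ z in Metric.ball (0 : En n) (1 / 2), ENNReal.ofReal (‖z‖ ^ s)
  set M := ∫⁻ y, ENNReal.ofReal (poissonKernelPT n α 1 y)
  have hJ : J ≠ ∞ := (setLIntegral_ball_norm_rpow_lt_top volume
    (by rwa [finrank_euclideanSpace_fin]) _ (by rwa [finrank_euclideanSpace_fin])).ne
  have hM : M ≠ ∞ := (lintegral_poissonKernelPT_one_lt_top hα).ne
  set K := ENNReal.ofReal a * J + ENNReal.ofReal ((1 / 2) ^ s) * M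
  have hK : K ≠ ∞ := by finiteness
  refine ⟨K.toReal + 1, by positivity, fun x t ht hsphere => ?_⟩
  have hnear : ∫⁻ y in Metric.ball x (1 / 2),
      ENNReal.ofReal (poissonKernelPT n α t y * ‖y - x‖ ^ s) ≤ ENNReal.ofReal a * J := by
    calc _ ≤ ∫⁻ y in Metric.ball x (1 / 2), ENNReal.ofReal a * ENNReal.ofReal (‖y - x‖ ^ s) := by
          refine setLIntegral_mono' Metric.isOpen_ball.measurableSet fun y hy => ?_
          rw [← ENNReal.ofReal_mul (by positivity [poissonConst_pos (n := n) hα])]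
          exact ENNReal.ofReal_le_ofReal (mul_le_mul_of_nonneg_right
            (poissonKernelPT_le_of_mem_ball hα ht.le hsphere hy) (by positivity))
      _ = _ := by
          rw [lintegral_const_mul' _ _ ENNReal.ofReal_ne_top, setLIntegral_ball_norm_sub_rpow]
  have hfar : ∫⁻ y in (Metric.ball x (1 / 2))ᶜ,
      ENNReal.ofReal (poissonKernelPT n α t y * ‖y - x‖ ^ s) ≤
        ENNReal.ofReal ((1 / 2) ^ s) * M := by
    calc _ ≤ ∫⁻ y in (Metric.ball x (1 / 2))ᶜ,
            ENNReal.ofReal ((1 / 2) ^ s) * ENNReal.ofReal (poissonKernelPT n α t y) := by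
          refine setLIntegral_mono' Metric.isOpen_ball.measurableSet.compl fun y hy => ?_
          have hyx : 1 / 2 ≤ ‖y - x‖ := by
            simpa [Metric.mem_ball, dist_eq_norm] using hy
          rw [← ENNReal.ofReal_mul (by positivity), mul_comm]
          exact ENNReal.ofReal_le_ofReal (mul_le_mul_of_nonneg_right
            (Real.rpow_le_rpow_of_nonpos (by norm_num) hyx hs0)
            (poissonKernelPT_nonneg hα ht.le y))
      _ ≤ ∫⁻ y, ENNReal.ofReal ((1 / 2) ^ s) * ENNReal.ofReal (poissonKernelPT n α t y) :=
          setLIntegral_le_lintegral _ _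
      _ = _ := by
          rw [lintegral_const_mul' _ _ ENNReal.ofReal_ne_top,
            lintegral_poissonKernelPT_eq_at_one hα ht]
  rw [← lintegral_add_compl _ Metric.isOpen_ball.measurableSet]
  calc _ ≤ K := add_le_add hnear hfar
    _ = ENNReal.ofReal K.toReal := (ENNReal.ofReal_toReal hK).symm
    _ ≤ ENNReal.ofReal (K.toReal + 1) := ENNReal.ofReal_le_ofReal (by linarith)

theorem kernel_riesz_estimate_general
    (n : ℕ) (hn : 1 ≤ n) (α β : ℝ) (hα0 : 0 < α)
    (hβ0 : 0 < β) (hβn : β < n) :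
    ∃ C : ℝ, 0 < C ∧ ∀ (x : En n) (t : ℝ), 0 < t →
      (∫⁻ y, ENNReal.ofReal (poissonKernelPT n α t y * ‖y - x‖ ^ (β - (n : ℝ)))) ≤
        ENNReal.ofReal (C * (t ^ 2 + ‖x‖ ^ 2) ^ ((β - (n : ℝ)) / 2)) := by
  obtain ⟨C, hC, hsphere_bound⟩ :=
    exists_lintegral_poissonKernelPT_mul_rpow_le_of_sphere hn hα0 (s := β - n)
      (by linarith) (by linarith)
  refine ⟨C, hC, fun x t ht => ?_⟩
  set R := √(t ^ 2 + ‖x‖ ^ 2) with hRdef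
  have hR : 0 < R := Real.sqrt_pos.2 (by positivity)
  have hscaled :=
    lintegral_poissonKernelPT_mul_rpow_smul hα0 hR (div_pos ht hR).le (R⁻¹ • x) (β - n)
  rw [smul_inv_smul₀ hR.ne', mul_div_cancel₀ _ hR.ne'] at hscaled
  have hsphere : (t / R) ^ 2 + ‖R⁻¹ • x‖ ^ 2 = 1 := by
    rw [norm_smul, norm_inv, Real.norm_of_nonneg hR.le, div_pow, mul_pow, inv_pow,
      Real.sq_sqrt (by positivity)]
    field_simp
  have hRpow : R ^ (β - n) = (t ^ 2 + ‖x‖ ^ 2) ^ ((β - n) / 2) := by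
    rw [hRdef, Real.sqrt_eq_rpow, ← Real.rpow_mul (by positivity)]
    ring_nf
  calc _ = ENNReal.ofReal (R ^ (β - n)) * ∫⁻ y,
        ENNReal.ofReal (poissonKernelPT n α (t / R) y * ‖y - R⁻¹ • x‖ ^ (β - n)) := hscaled
    _ ≤ ENNReal.ofReal (R ^ (β - n)) * ENNReal.ofReal C := by
        gcongr; exact hsphere_bound _ _ (div_pos ht hR) hsphere
    _ = _ := by rw [← ENNReal.ofReal_mul (by positivity), mul_comm, hRpow]

/-- Kernel–Riesz potential estimate:
`∫_{ℝⁿ} p^α_t(y) |y-x|^{β-n} dy ≤ C (t² + |x|²)^{(β-n)/2}`. -/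
theorem kernel_riesz_estimate
    (n : ℕ) (hn : 1 ≤ n) (α β : ℝ) (hα0 : 0 < α) (hα2 : α < 2)
    (hβ0 : 0 < β) (hβn : β < n) :
    ∃ C : ℝ, 0 < C ∧ ∀ (x : En n) (t : ℝ), 0 < t →
      (∫⁻ y, ENNReal.ofReal (poissonKernelPT n α t y * ‖y - x‖ ^ (β - (n : ℝ)))) ≤
        ENNReal.ofReal (C * (t ^ 2 + ‖x‖ ^ 2) ^ ((β - (n : ℝ)) / 2)) :=
  kernel_riesz_estimate_general n hn α β hα0 hβ0 hβn
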